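/- (Theorem 2) For the RCA defined by X(k,n+2) = cos θ [X(k+1,n+1) − X(k−1,n+1)] + X(k,n), the following three sets of initial states (α, β, γ) coincide: (a) the set Φ⊥ of states with β + γ = 0, or (|β| = |γ| > 0 and α = 0), or (|β| = |γ| > 0, α ≠ 0, and arg β + arg γ − 2 arg α ≡ π mod 2π); (b) the set Φ_s of states for which |X(k,n)| = |X(−k,n)| for all k, n; (c) the set Φ₀ of states for which ∑_k k·|X(k,n)|² = 0 for all n. -/

import Mathlib

/-!
Write the solution as `X = α A + β B + γ C` with real solutions `A, B, C`. Since `(-1)ⁿ X(-k, n)`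
is again a solution, started from `(α, -γ, -β)`, one gets
`|X(k,n)|² - |X(-k,n)|² = (|β|² - |γ|²)(B² - C²) + 2 Re(ᾱ(β + γ)) A (B + C)`.
Hence `|β| = |γ|` and `Re(ᾱ(β + γ)) = 0` force the mirror symmetry, which kills the momentum
`∑ k |X(k,n)|²`. Conversely the momentum is `|γ|² - |β|²` at time 1 and, once `|β| = |γ|`,
`-2 c (1 - c²) Re(ᾱ(β + γ))` at time 3, where `0 < c = cos θ < 1`. In polar form the condition
`Re(ᾱβ + ᾱγ) = 0` with `|ᾱβ| = |ᾱγ|` says that `ᾱβ + ᾱγ = 0` or `ᾱβ · ᾱγ < 0`, which is (a).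
-/

open Finset ComplexConjugate

section Recurrence

variable {R : Type*} [CommRing R] {c : R}

def IsRCASolution (c : R) (X : ℕ → ℤ → R) : Prop :=
  ∀ n k, X (n + 2) k = c * (X (n + 1) (k + 1) - X (n + 1) (k - 1)) + X n k

def rcaSol (c : R) (f g : ℤ → R) : ℕ → ℤ → R
  | 0 => f
  | 1 => g
  | n + 2 => fun k => c * (rcaSol c f g (n + 1) (k + 1) - rcaSol c f g (n + 1) (k - 1)) +
      rcaSol c f g n k

theorem isRCASolution_rcaSol (c : R) (f g : ℤ → R) : IsRCASolution c (rcaSol c f g) :=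
  fun _ _ => rfl

theorem IsRCASolution.eq_rcaSol {X : ℕ → ℤ → R} (hX : IsRCASolution c X) :
    X = rcaSol c (X 0) (X 1) := by
  funext n
  induction n using Nat.twoStepInduction with
  | zero => rfl
  | one => rfl
  | more n ih₀ ih₁ => funext k; rw [hX, ih₀, ih₁]; rfl

theorem IsRCASolution.mirror {X : ℕ → ℤ → R} (hX : IsRCASolution c X) :
    IsRCASolution c (fun n k => (-1) ^ n * X n (-k)) := by
  intro n k
  dsimp only
  rw [hX, show -(k + 1) = -k - 1 by ring, show -(k - 1) = -k + 1 by ring]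
  ring

theorem rcaSol_neg (c : R) (f g : ℤ → R) (n : ℕ) (k : ℤ) :
    rcaSol c f g n (-k) = (-1) ^ n * rcaSol c (fun k => f (-k)) (fun k => -g (-k)) n k := by
  have h := (isRCASolution_rcaSol c f g).mirror.eq_rcaSol
  have := congrFun (congrFun h n) k
  simp only [pow_zero, one_mul, pow_one, neg_one_mul] at this
  change _ = rcaSol c (fun k => f (-k)) (fun k => -g (-k)) n k at this
  rw [← this, ← mul_assoc, ← pow_add, ← two_mul, pow_mul, neg_one_sq, one_pow, one_mul]

theorem rcaSol_eq_zero_of_lt_natAbs {f g : ℤ → R} {r : ℕ} (hf : ∀ k, r < k.natAbs → f k = 0)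
    (hg : ∀ k, r + 1 < k.natAbs → g k = 0) (n : ℕ) (k : ℤ) (hk : r + n < k.natAbs) :
    rcaSol c f g n k = 0 := by
  induction n using Nat.twoStepInduction generalizing k with
  | zero => exact hf k hk
  | one => exact hg k hk
  | more n ih₀ ih₁ =>
    rw [isRCASolution_rcaSol, ih₀ _ (by omega), ih₁ _ (by omega), ih₁ _ (by omega)]
    ring

-- `rcaState c α β γ n k` plays the role of `X (k, n)`: time first, site second.
def rcaState (c α β γ : R) : ℕ → ℤ → R :=
  rcaSol c (Pi.single 0 α) (Pi.single (-1) β + Pi.single 1 γ)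

theorem rcaState_neg (c α β γ : R) (n : ℕ) (k : ℤ) :
    rcaState c α β γ n (-k) = (-1) ^ n * rcaState c α (-γ) (-β) n k := by
  rw [rcaState, rcaSol_neg, rcaState]
  congr 3 <;> funext j <;> simp only [Pi.add_apply, Pi.single_apply, neg_eq_iff_eq_neg, neg_neg] <;>
    split_ifs <;> simp_all

theorem IsRCASolution.eq_rcaState {X : ℕ → ℤ → R} {α β γ : R} (hX : IsRCASolution c X)
    (h00 : X 0 0 = α) (h0 : ∀ k, k ≠ 0 → X 0 k = 0) (hm1 : X 1 (-1) = β) (hp1 : X 1 1 = γ)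
    (h1 : ∀ k, k ≠ -1 → k ≠ 1 → X 1 k = 0) : X = rcaState c α β γ := by
  rw [hX.eq_rcaSol, rcaState]
  congr 1 <;> funext k
  · by_cases hk : k = 0
    · simp [hk, h00]
    · simp [hk, h0 k hk]
  · by_cases hk₁ : k = -1
    · simp [hk₁, hm1]
    by_cases hk₂ : k = 1
    · simp [hk₂, hp1]
    · simp [hk₁, hk₂, h1 k hk₁ hk₂]

theorem rcaState_eq_zero_of_lt_natAbs (c α β γ : R) {n : ℕ} {k : ℤ} (hk : n < k.natAbs) :
    rcaState c α β γ n k = 0 := by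
  refine rcaSol_eq_zero_of_lt_natAbs (r := 0) (fun j hj => ?_) (fun j hj => ?_) n k (by omega)
  · simp [show j ≠ 0 by omega]
  · simp [show j ≠ -1 by omega, show j ≠ 1 by omega]

theorem isRCASolution_rcaState (c α β γ : R) : IsRCASolution c (rcaState c α β γ) :=
  isRCASolution_rcaSol _ _ _

end Recurrence

section Complex

open Real

theorem norm_sq_add_sub_norm_sq_sub (α β γ : ℂ) (a b c : ℝ) :
    ‖α * a + β * b + γ * c‖ ^ 2 - ‖α * a - γ * b - β * c‖ ^ 2 =
      (‖β‖ ^ 2 - ‖γ‖ ^ 2) * (b ^ 2 - c ^ 2) + 2 * (conj α * (β + γ)).re * (a * (b + c)) := by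
  simp only [Complex.sq_norm, Complex.normSq_apply, Complex.add_re, Complex.add_im,
    Complex.sub_re, Complex.sub_im, Complex.mul_re, Complex.mul_im, Complex.conj_re,
    Complex.conj_im, Complex.ofReal_re, Complex.ofReal_im]
  ring

theorem rcaState_ofReal (c : ℝ) (α β γ : ℂ) (n : ℕ) (k : ℤ) :
    rcaState (c : ℂ) α β γ n k =
      α * rcaState c 1 0 0 n k + β * rcaState c 0 1 0 n k + γ * rcaState c 0 0 1 n k := by
  have hsol : IsRCASolution (c : ℂ) fun n k =>
      α * rcaState c 1 0 0 n k + β * rcaState c 0 1 0 n k + γ * rcaState c 0 0 1 n k := by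
    intro n k
    simp only [isRCASolution_rcaState c _ _ _ n]
    push_cast
    ring
  refine (congrFun (congrFun (hsol.eq_rcaState ?_ ?_ ?_ ?_ ?_) n) k).symm <;>
    simp +contextual [rcaState, rcaSol]

theorem rcaState_basis_three (c : ℝ) :
    rcaState c 1 0 0 3 1 = -c ∧ rcaState c 1 0 0 3 2 = 0 ∧ rcaState c 1 0 0 3 3 = 0 ∧
      rcaState c 0 1 0 3 1 = c ^ 2 ∧ rcaState c 0 0 1 3 1 = 1 - 2 * c ^ 2 := by
  norm_num [rcaState, rcaSol]
  constructor <;> ring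

theorem norm_sq_rcaState_sub_norm_sq_rcaState_neg (c : ℝ) (α β γ : ℂ) (n : ℕ) (k : ℤ) :
    ‖rcaState (c : ℂ) α β γ n k‖ ^ 2 - ‖rcaState (c : ℂ) α β γ n (-k)‖ ^ 2 =
      (‖β‖ ^ 2 - ‖γ‖ ^ 2) * (rcaState c 0 1 0 n k ^ 2 - rcaState c 0 0 1 n k ^ 2) +
        2 * (conj α * (β + γ)).re *
          (rcaState c 1 0 0 n k * (rcaState c 0 1 0 n k + rcaState c 0 0 1 n k)) := by
  rw [rcaState_neg, norm_mul, norm_pow, norm_neg, norm_one, one_pow, one_mul, rcaState_ofReal,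
    rcaState_ofReal, neg_mul, neg_mul, ← sub_eq_add_neg, ← sub_eq_add_neg]
  exact norm_sq_add_sub_norm_sq_sub α β γ _ _ _

theorem tsum_int_mul_eq_sum_range {f : ℤ → ℝ} {N : ℕ} (hf : ∀ k, N < k.natAbs → f k = 0) :
    ∑' k : ℤ, k * f k = ∑ k ∈ range (N + 1), k * (f k - f (-k)) := by
  have hsum : Summable fun k : ℤ => k * f k :=
    summable_of_ne_finset_zero (s := Icc (-N : ℤ) N) fun k hk => by
      rw [hf k (by rw [mem_Icc] at hk; omega), mul_zero]
  have := hsum.hasSum.nat_add_neg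
  simp only [Int.cast_zero, zero_mul, add_zero] at this
  rw [← this.tsum_eq, tsum_eq_sum (s := range (N + 1))]
  · exact sum_congr rfl fun k _ => by push_cast; ring
  · intro k hk
    rw [hf k (by rw [mem_range] at hk; omega), hf (-k) (by rw [mem_range] at hk; omega)]
    simp

theorem tsum_mul_norm_sq_rcaState (c α β γ : ℂ) (n : ℕ) :
    ∑' k : ℤ, k * ‖rcaState c α β γ n k‖ ^ 2 =
      ∑ k ∈ range (n + 1),
        k * (‖rcaState c α β γ n k‖ ^ 2 - ‖rcaState c α β γ n (-k)‖ ^ 2) :=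
  tsum_int_mul_eq_sum_range fun k hk => by
    rw [rcaState_eq_zero_of_lt_natAbs c α β γ hk, norm_zero, zero_pow two_ne_zero]

theorem Complex.re_add_eq_zero_iff_of_norm_eq {u v : ℂ} (h : ‖u‖ = ‖v‖) :
    (u + v).re = 0 ↔ u + v = 0 ∨ (u * v).arg = π := by
  have hn : Complex.normSq u = Complex.normSq v := by
    rw [Complex.normSq_eq_norm_sq, Complex.normSq_eq_norm_sq, h]
  simp only [Complex.normSq_apply] at hn
  rw [Complex.arg_eq_pi_iff, Complex.ext_iff]
  simp only [Complex.add_re, Complex.add_im, Complex.mul_re, Complex.mul_im, Complex.zero_re,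
    Complex.zero_im]
  constructor
  · intro hre
    have hs : v.re = -u.re := by linarith
    rw [hs] at hn
    have : (v.im - u.im) * (v.im + u.im) = 0 := by nlinarith
    rcases mul_eq_zero.mp this with ht | ht
    · by_cases hy : u.im = 0
      · left; constructor <;> linarith
      · right; rw [hs, show v.im = u.im by linarith]; constructor
        · nlinarith [sq_pos_of_ne_zero hy, sq_nonneg u.re]
        · ring
    · left; exact ⟨hre, by linarith⟩
  · rintro (⟨hre, -⟩ | ⟨hre, him⟩)
    · exact hre
    · have hsq : (u.re * v.re - u.im * v.im) ^ 2 = (u.re ^ 2 + u.im ^ 2) ^ 2 := by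
        nlinarith [sq_nonneg (u.re * v.im + u.im * v.re)]
      have hneg : u.re * v.re - u.im * v.im = -(u.re ^ 2 + u.im ^ 2) := by
        nlinarith [sq_nonneg (u.re ^ 2 + u.im ^ 2)]
      nlinarith [sq_nonneg (u.re + v.re), sq_nonneg (u.im - v.im)]

theorem Complex.arg_conj_mul_mul_conj_mul_eq_pi_iff {α β γ : ℂ} (hα : α ≠ 0) (hβ : β ≠ 0)
    (hγ : γ ≠ 0) :
    (conj α * β * (conj α * γ)).arg = π ↔
      ∃ m : ℤ, β.arg + γ.arg - 2 * α.arg = π + 2 * π * m := by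
  have hα' : conj α ≠ 0 := (map_ne_zero _).mpr hα
  have hangle : ((conj α * β * (conj α * γ)).arg : Angle) = (β.arg + γ.arg - 2 * α.arg : ℝ) := by
    rw [Complex.arg_mul_coe_angle (mul_ne_zero hα' hβ) (mul_ne_zero hα' hγ),
      Complex.arg_mul_coe_angle hα' hβ, Complex.arg_mul_coe_angle hα' hγ,
      Complex.arg_conj_coe_angle, two_mul, Real.Angle.coe_sub, Real.Angle.coe_add,
      Real.Angle.coe_add]
    abel
  have hpi : ∀ z : ℂ, z.arg = π ↔ (z.arg : Angle) = π := fun z => by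
    rw [Complex.arg_coe_angle_eq_iff_eq_toReal, Real.Angle.toReal_pi]
  rw [hpi, hangle, Real.Angle.angle_eq_iff_two_pi_dvd_sub]
  exact exists_congr fun m => sub_eq_iff_eq_add'

def IsBalancedState (α β γ : ℂ) : Prop :=
  ‖β‖ = ‖γ‖ ∧ (conj α * (β + γ)).re = 0

theorem isBalancedState_iff (α β γ : ℂ) :
    IsBalancedState α β γ ↔
      β + γ = 0 ∨ (‖β‖ = ‖γ‖ ∧ 0 < ‖β‖ ∧ α = 0) ∨
        (‖β‖ = ‖γ‖ ∧ 0 < ‖β‖ ∧ α ≠ 0 ∧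
          ∃ m : ℤ, β.arg + γ.arg - 2 * α.arg = π + 2 * π * m) := by
  by_cases hβγ : β + γ = 0
  · refine iff_of_true ⟨?_, by rw [hβγ, mul_zero, Complex.zero_re]⟩ (Or.inl hβγ)
    rw [eq_neg_of_add_eq_zero_right hβγ, norm_neg]
  have hβ : ‖β‖ = ‖γ‖ → β ≠ 0 := fun h hβ => hβγ <| by
    rw [hβ, norm_zero, eq_comm, norm_eq_zero] at h; rw [hβ, h, add_zero]
  by_cases hα : α = 0
  · simp only [IsBalancedState, hα, map_zero, zero_mul, Complex.zero_re, and_true, hβγ, false_or,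
      ne_eq, not_true_eq_false, false_and, and_false, or_false]
    exact ⟨fun h => ⟨h, norm_pos_iff.mpr (hβ h)⟩, And.left⟩
  simp only [IsBalancedState, hα, hβγ, false_or, and_false, ne_eq, not_false_eq_true, true_and]
  refine and_congr_right fun h => ?_
  have hγ : γ ≠ 0 := norm_ne_zero_iff.mp (h ▸ norm_ne_zero_iff.mpr (hβ h))
  rw [mul_add, Complex.re_add_eq_zero_iff_of_norm_eq (by simp [h]),
    Complex.arg_conj_mul_mul_conj_mul_eq_pi_iff hα (hβ h) hγ, ← mul_add]
  simp [hα, hβγ, hβ h]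

theorem IsBalancedState.norm_rcaState_neg {α β γ : ℂ} (h : IsBalancedState α β γ) (c : ℝ)
    (k : ℤ) (n : ℕ) : ‖rcaState (c : ℂ) α β γ n k‖ = ‖rcaState (c : ℂ) α β γ n (-k)‖ := by
  have := norm_sq_rcaState_sub_norm_sq_rcaState_neg c α β γ n k
  rw [h.1, h.2, sub_self, zero_mul, mul_zero, zero_mul, add_zero, sub_eq_zero] at this
  exact (pow_left_inj₀ (norm_nonneg _) (norm_nonneg _) two_ne_zero).mp this

theorem tsum_mul_norm_sq_rcaState_eq_zero {c α β γ : ℂ}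
    (h : ∀ (k : ℤ) (n : ℕ), ‖rcaState c α β γ n k‖ = ‖rcaState c α β γ n (-k)‖) (n : ℕ) :
    ∑' k : ℤ, k * ‖rcaState c α β γ n k‖ ^ 2 = 0 := by
  rw [tsum_mul_norm_sq_rcaState]
  exact sum_eq_zero fun k _ => by rw [h, sub_self, mul_zero]

theorem isBalancedState_of_tsum_mul_norm_sq_rcaState_eq_zero {c : ℝ} (hc₀ : c ≠ 0)
    (hc₁ : c ^ 2 ≠ 1) {α β γ : ℂ}
    (h : ∀ n : ℕ, ∑' k : ℤ, k * ‖rcaState (c : ℂ) α β γ n k‖ ^ 2 = 0) :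
    IsBalancedState α β γ := by
  have hnorm : ‖β‖ = ‖γ‖ := by
    have h1 := h 1
    rw [tsum_mul_norm_sq_rcaState] at h1
    simpa [sum_range_succ, rcaState, rcaSol, sub_eq_zero, eq_comm] using h1
  refine ⟨hnorm, ?_⟩
  have h3 := h 3
  rw [tsum_mul_norm_sq_rcaState] at h3
  obtain ⟨hA₁, hA₂, hA₃, hB₁, hC₁⟩ := rcaState_basis_three c
  simp only [sum_range_succ, sum_range_zero, norm_sq_rcaState_sub_norm_sq_rcaState_neg, hnorm,
    sub_self, zero_mul, zero_add, Nat.cast_zero, Nat.cast_one, Nat.cast_ofNat, hA₁, hA₂, hA₃, hB₁,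
    hC₁] at h3
  have : (conj α * (β + γ)).re * (c * (1 - c ^ 2)) = 0 := by linear_combination -h3 / 2
  exact (mul_eq_zero.mp this).resolve_right (mul_ne_zero hc₀ (sub_ne_zero.mpr hc₁.symm))

end Complex

theorem stmt11 (θ : ℝ) (hθ : θ ∈ Set.Ioo 0 (Real.pi / 2)) (α β γ : ℂ) (X : ℤ × ℕ → ℂ)
    (hrec : ∀ (k : ℤ) (n : ℕ),
      X (k, n + 2) = (Real.cos θ : ℂ) * (X (k + 1, n + 1) - X (k - 1, n + 1)) + X (k, n))
    (h00 : X (0, 0) = α) (hm1 : X (-1, 1) = β) (hp1 : X (1, 1) = γ)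
    (h0 : ∀ k : ℤ, k ≠ 0 → X (k, 0) = 0)
    (h1 : ∀ k : ℤ, k ≠ -1 → k ≠ 1 → X (k, 1) = 0) :
    ((β + γ = 0 ∨
        (‖β‖ = ‖γ‖ ∧ 0 < ‖β‖ ∧ α = 0) ∨
        (‖β‖ = ‖γ‖ ∧ 0 < ‖β‖ ∧ α ≠ 0 ∧
          ∃ m : ℤ, Complex.arg β + Complex.arg γ - 2 * Complex.arg α
            = Real.pi + 2 * Real.pi * m)) ↔
      (∀ (k : ℤ) (n : ℕ), ‖X (k, n)‖ = ‖X (-k, n)‖)) ∧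
    ((∀ (k : ℤ) (n : ℕ), ‖X (k, n)‖ = ‖X (-k, n)‖) ↔
      (∀ n : ℕ, ∑' k : ℤ, (k : ℝ) * ‖X (k, n)‖ ^ 2 = 0)) := by
  have hX : ∀ k n, X (k, n) = rcaState (Real.cos θ : ℂ) α β γ n k := fun k n =>
    congrFun (congrFun (IsRCASolution.eq_rcaState (X := fun n k => X (k, n))
      (fun n k => hrec k n) h00 h0 hm1 hp1 h1) n) k
  have hcos : 0 < Real.cos θ := Real.cos_pos_of_mem_Ioo ⟨by linarith [hθ.1, Real.pi_pos], hθ.2⟩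
  have hsin : 0 < Real.sin θ :=
    Real.sin_pos_of_pos_of_lt_pi hθ.1 (by linarith [hθ.2, Real.pi_pos])
  have hcos_sq : Real.cos θ ^ 2 ≠ 1 :=
    (by nlinarith [Real.sin_sq_add_cos_sq θ] : Real.cos θ ^ 2 < 1).ne
  have hPb := fun h : IsBalancedState α β γ => h.norm_rcaState_neg (Real.cos θ)
  have hbc := tsum_mul_norm_sq_rcaState_eq_zero (c := Real.cos θ) (α := α) (β := β) (γ := γ)
  have hcP := isBalancedState_of_tsum_mul_norm_sq_rcaState_eq_zero (α := α) (β := β) (γ := γ)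
    hcos.ne' hcos_sq
  simp only [hX]
  rw [← isBalancedState_iff]
  exact ⟨⟨hPb, hcP ∘ hbc⟩, ⟨hbc, hPb ∘ hcP⟩⟩
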